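/- Let $n \ge 1$ and $0 < \lambda < n$. There exists a constant $C > 0$, depending only on $n$ and $\lambda$, such that the inequality $$\|Mf\|_{\mathcal{M}_{1,\lambda}} \;\le\; C\, \|f\|_{\mathcal{M}_{1,\lambda}}$$ holds for all radial, decreasing functions $f$ on $\mathbb{R}^n$, i.e. all $f$ with $f(x) = \varphi(|x|)$ for some nonnegative nonincreasing $\varphi$ on $(0,\infty)$. Here $Mf$ denotes the Hardy–Littlewood maximal function of $f$. -/

import Mathlib

/-!
For `f = φ(|·|)` radial and decreasing, averaging over `B(0, R)` gives
`φ(R) ≲ R^{-λ} ‖f‖_{M_{1,λ}}`. Every ball `B` containing a point `y ≠ 0` is then either small,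
so that `B` stays outside `B(0, |y|/2)` and the average of `f` over `B` is at most `φ(|y|/2)`,
or large, so that `B` lies in a centred ball of comparable radius `≳ |y|`. Either way
`Mf(y) ≲ |y|^{-λ} ‖f‖_{M_{1,λ}}`, and since `λ < n` the weight `|y|^{-λ}` is itself in
`M_{1,λ}`: polar coordinates give `∫_{B(0,R)} |y|^{-λ} dy = n/(n-λ) |B(0,1)| R^{n-λ}`.
-/

open MeasureTheory Set
open scoped ENNReal NNReal

/-- The Hardy–Littlewood maximal function `Mf(x) = sup_{B ∋ x} |B|⁻¹ ∫_B |f|`,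
supremum over open balls containing `x`, valued in `ℝ≥0∞`. -/
noncomputable def maximalFn (n : ℕ) (f : EuclideanSpace ℝ (Fin n) → ℝ)
    (x : EuclideanSpace ℝ (Fin n)) : ℝ≥0∞ :=
  ⨆ (z : EuclideanSpace ℝ (Fin n)) (r : ℝ) (_ : 0 < r) (_ : x ∈ Metric.ball z r),
    (volume (Metric.ball z r))⁻¹ * ∫⁻ y in Metric.ball z r, ‖f y‖₊

/-- The Morrey "norm" `‖f‖_{M_{1,λ}} = sup_{x ∈ ℝⁿ, r > 0} r^{λ-n} ∫_{B(x,r)} |f|`. -/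
noncomputable def morreyNorm (n : ℕ) (lam : ℝ) (f : EuclideanSpace ℝ (Fin n) → ℝ) : ℝ≥0∞ :=
  ⨆ (x : EuclideanSpace ℝ (Fin n)) (r : ℝ) (_ : 0 < r),
    ENNReal.ofReal (r ^ (lam - (n:ℝ))) * ∫⁻ y in Metric.ball x r, ‖f y‖₊

/-- The Morrey "norm" of an `ℝ≥0∞`-valued function. -/
noncomputable def morreyNormE (n : ℕ) (lam : ℝ) (g : EuclideanSpace ℝ (Fin n) → ℝ≥0∞) : ℝ≥0∞ :=
  ⨆ (x : EuclideanSpace ℝ (Fin n)) (r : ℝ) (_ : 0 < r),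
    ENNReal.ofReal (r ^ (lam - (n:ℝ))) * ∫⁻ y in Metric.ball x r, g y

open Metric

theorem measureReal_ball_pos {E : Type*} [PseudoMetricSpace E] [ProperSpace E] [MeasurableSpace E]
    (μ : Measure E) [μ.IsOpenPosMeasure] [IsFiniteMeasureOnCompacts μ] (x : E) {r : ℝ}
    (hr : 0 < r) : 0 < μ.real (ball x r) :=
  ENNReal.toReal_pos (measure_ball_pos μ x hr).ne' measure_ball_lt_top.ne

section BallGeometry

variable {E : Type*} [SeminormedAddCommGroup E] {y z : E} {s : ℝ}

theorem ball_subset_ball_zero_of_mem (hy : y ∈ ball z s) : ball z s ⊆ ball 0 (‖y‖ + 2 * s) := by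
  refine ball_subset_ball' ?_
  have := dist_triangle z y 0
  rw [mem_ball'] at hy
  simp only [dist_zero_right] at this ⊢
  linarith

theorem norm_lt_norm_add_of_mem_ball {w : E} (hy : y ∈ ball z s) (hw : w ∈ ball z s) :
    ‖y‖ < ‖w‖ + 2 * s := by
  have := dist_triangle4 y z w 0
  rw [mem_ball] at hy hw
  rw [dist_comm z w, dist_zero_right, dist_zero_right] at this
  linarith

end BallGeometry

section Haar

variable {E : Type*} [NormedAddCommGroup E] [NormedSpace ℝ E] [FiniteDimensional ℝ E]
  [MeasurableSpace E] [BorelSpace E] (μ : Measure E) [μ.IsAddHaarMeasure]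

theorem inv_measure_ball_mul_ofReal (x : E) {s : ℝ} (hs : 0 < s) (σ : ℝ) :
    (μ (ball x s))⁻¹ * ENNReal.ofReal σ
      = ENNReal.ofReal (σ / (s ^ Module.finrank ℝ E * μ.real (ball 0 1))) := by
  have hv : 0 < μ.real (ball (0 : E) 1) := measureReal_ball_pos μ 0 one_pos
  rw [ENNReal.ofReal_div_of_pos (by positivity), ENNReal.ofReal_mul (by positivity),
    ofReal_measureReal, ← Measure.addHaar_ball_of_pos μ x hs, div_eq_mul_inv, mul_comm]

theorem integral_ball_norm_rpow [Nontrivial E] {α R : ℝ} (hα : α < Module.finrank ℝ E)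
    (hR : 0 ≤ R) :
    ∫ x in ball (0 : E) R, ‖x‖ ^ (-α) ∂μ =
      Module.finrank ℝ E / (Module.finrank ℝ E - α) * μ.real (ball 0 1) *
        R ^ (Module.finrank ℝ E - α) := by
  have hball : (ball (0 : E) R).indicator (fun x => ‖x‖ ^ (-α))
      = fun x => (Iio R).indicator (fun t : ℝ => t ^ (-α)) ‖x‖ := by
    ext x; simp [indicator]
  have hrad : ∫ t in Ioi (0:ℝ), t ^ (Module.finrank ℝ E - 1) • (Iio R).indicator (· ^ (-α)) t
      = ∫ t in (0:ℝ)..R, t ^ ((Module.finrank ℝ E : ℝ) - 1 - α) := by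
    rw [intervalIntegral.integral_of_le hR, integral_Ioc_eq_integral_Ioo, ← Ioi_inter_Iio,
      ← setIntegral_indicator measurableSet_Iio]
    refine setIntegral_congr_fun measurableSet_Ioi fun t (ht : 0 < t) => ?_
    by_cases htR : t < R
    · have : ((Module.finrank ℝ E - 1 : ℕ) : ℝ) = Module.finrank ℝ E - 1 := by
        rw [Nat.cast_sub Module.finrank_pos, Nat.cast_one]
      simp [htR, ← Real.rpow_natCast, this, ← Real.rpow_add ht, sub_eq_add_neg]
    · simp [htR]
  rw [← integral_indicator measurableSet_ball, hball, integral_fun_norm_addHaar μ, hrad,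
    integral_rpow (Or.inl (by linarith)), Real.zero_rpow (by linarith),
    show (Module.finrank ℝ E : ℝ) - 1 - α + 1 = Module.finrank ℝ E - α by ring,
    nsmul_eq_mul, smul_eq_mul]
  ring

theorem lintegral_ball_norm_rpow [Nontrivial E] {α R : ℝ} (hα : α < Module.finrank ℝ E)
    (hR : 0 ≤ R) :
    ∫⁻ x in ball (0 : E) R, ENNReal.ofReal (‖x‖ ^ (-α)) ∂μ =
      ENNReal.ofReal (Module.finrank ℝ E / (Module.finrank ℝ E - α) * μ.real (ball 0 1) *
        R ^ (Module.finrank ℝ E - α)) := by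
  have hint : IntegrableOn (fun x : E => ‖x‖ ^ (-α)) (ball 0 R) μ :=
    integrableOn_ball_of_norm_le_rpow Module.finrank_pos hα
      (ae_of_all _ fun x => by rw [one_mul, Real.norm_of_nonneg (by positivity)])
      (measurable_norm.pow_const _).aestronglyMeasurable
  rw [← integral_ball_norm_rpow μ hα hR,
    ofReal_integral_eq_lintegral_ofReal hint (ae_of_all _ fun x => by positivity)]

theorem lintegral_ball_norm_rpow_le [Nontrivial E] {α : ℝ} (hα0 : 0 ≤ α)
    (hα : α < Module.finrank ℝ E) (x : E) {r : ℝ} (hr : 0 < r) :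
    ∫⁻ y in ball x r, ENNReal.ofReal (‖y‖ ^ (-α)) ∂μ ≤
      ENNReal.ofReal ((Module.finrank ℝ E / (Module.finrank ℝ E - α) *
        3 ^ ((Module.finrank ℝ E : ℝ) - α) + 1) * μ.real (ball 0 1) *
          r ^ ((Module.finrank ℝ E : ℝ) - α)) := by
  set d : ℝ := (Module.finrank ℝ E : ℝ)
  have hv := measureReal_ball_pos μ (0 : E) one_pos
  rcases le_or_gt ‖x‖ (2 * r) with hnear | hfar
  · have hsub : ball x r ⊆ ball 0 (3 * r) := by
      refine ball_subset_ball' ?_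
      rw [dist_zero_right]
      linarith
    refine (lintegral_mono_set hsub).trans ?_
    rw [lintegral_ball_norm_rpow μ hα (by positivity), Real.mul_rpow (by norm_num) hr.le]
    refine ENNReal.ofReal_le_ofReal ?_
    have : 0 ≤ μ.real (ball 0 1) * r ^ (d - α) := by positivity
    nlinarith
  · have hbound : ∀ y ∈ ball x r, ENNReal.ofReal (‖y‖ ^ (-α)) ≤ ENNReal.ofReal (r ^ (-α)) :=
      fun y hy => by
        have := dist_triangle x y 0
        rw [dist_zero_right, dist_zero_right, dist_comm] at this
        have hy : dist y x < r := hy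
        exact ENNReal.ofReal_le_ofReal
          (Real.rpow_le_rpow_of_nonpos hr (by linarith) (neg_nonpos.2 hα0))
    calc ∫⁻ y in ball x r, ENNReal.ofReal (‖y‖ ^ (-α)) ∂μ
        ≤ ∫⁻ _ in ball x r, ENNReal.ofReal (r ^ (-α)) ∂μ :=
          setLIntegral_mono measurable_const hbound
      _ = ENNReal.ofReal (μ.real (ball 0 1) * r ^ (d - α)) := by
          rw [setLIntegral_const, Measure.addHaar_ball_of_pos μ x hr, ← ofReal_measureReal,
            ← ENNReal.ofReal_mul (by positivity), ← ENNReal.ofReal_mul (by positivity),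
            sub_eq_neg_add, Real.rpow_add hr, Real.rpow_natCast]
          ring_nf
      _ ≤ _ := by
          refine ENNReal.ofReal_le_ofReal ?_
          have : 0 ≤ d / (d - α) * 3 ^ (d - α) * μ.real (ball 0 1) * r ^ (d - α) := by
            have : 0 < d - α := by linarith
            positivity
          nlinarith

end Haar

section Radial

variable {E : Type*} [NormedAddCommGroup E] [MeasurableSpace E] {μ : Measure E}
  {f : E → ℝ} {φ : ℝ → ℝ}

theorem setLAverage_le_of_radial (hφ0 : ∀ ρ ∈ Ioi (0:ℝ), 0 ≤ φ ρ) (hφ : AntitoneOn φ (Ioi 0))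
    (hf : ∀ x, f x = φ ‖x‖) {s : Set E} (hs : MeasurableSet s) {R : ℝ} (hR : 0 < R)
    (hsR : ∀ w ∈ s, R ≤ ‖w‖) :
    ⨍⁻ w in s, ‖f w‖₊ ∂μ ≤ ENNReal.ofReal (φ R) := by
  refine (laverage_le_essSup _).trans (essSup_le_of_ae_le _ ?_)
  filter_upwards [ae_restrict_mem hs] with w hw
  have hw0 : 0 < ‖w‖ := hR.trans_le (hsR w hw)
  rw [hf, ← enorm_eq_nnnorm, Real.enorm_eq_ofReal (hφ0 _ hw0)]
  exact ENNReal.ofReal_le_ofReal (hφ hR hw0 (hsR w hw))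

theorem ofReal_le_setLAverage_ball_of_radial [OpensMeasurableSpace E] [NullSingletonClass μ]
    (hφ : AntitoneOn φ (Ioi 0)) (hf : ∀ x, f x = φ ‖x‖) {R : ℝ} (hR : 0 < R)
    (h0 : μ (ball 0 R) ≠ 0) (htop : μ (ball 0 R) ≠ ∞) :
    ENNReal.ofReal (φ R) ≤ ⨍⁻ w in ball 0 R, ‖f w‖₊ ∂μ := by
  rw [← setLAverage_const h0 htop (ENNReal.ofReal (φ R))]
  refine laverage_mono_ae ?_
  filter_upwards [ae_restrict_mem measurableSet_ball, ae_restrict_of_ae (μ.ae_ne 0)]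
    with w hwR hw0
  have hw0 : 0 < ‖w‖ := norm_pos_iff.2 hw0
  rw [hf, ← enorm_eq_nnnorm, Real.enorm_eq_ofReal_abs]
  exact ENNReal.ofReal_le_ofReal ((hφ hw0 hR (mem_ball_zero_iff.1 hwR).le).trans (le_abs_self _))

end Radial

theorem lintegral_ball_le_morreyNorm {n : ℕ} (lam : ℝ) (f : EuclideanSpace ℝ (Fin n) → ℝ)
    (x : EuclideanSpace ℝ (Fin n)) {r : ℝ} (hr : 0 < r) :
    ∫⁻ y in ball x r, ‖f y‖₊ ≤ ENNReal.ofReal (r ^ ((n:ℝ) - lam)) * morreyNorm n lam f := by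
  calc ∫⁻ y in ball x r, ‖f y‖₊
      = ENNReal.ofReal (r ^ ((n:ℝ) - lam)) *
        (ENNReal.ofReal (r ^ (lam - n)) * ∫⁻ y in ball x r, ‖f y‖₊) := by
        rw [← mul_assoc, ← ENNReal.ofReal_mul (by positivity), ← Real.rpow_add hr,
          sub_add_sub_cancel', sub_self, Real.rpow_zero, ENNReal.ofReal_one, one_mul]
    _ ≤ _ := by
        gcongr
        exact le_iSup_of_le x (le_iSup_of_le r (le_iSup_of_le hr le_rfl))

theorem setLAverage_ball_le_morreyNorm {n : ℕ} (lam : ℝ) (f : EuclideanSpace ℝ (Fin n) → ℝ)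
    {z x : EuclideanSpace ℝ (Fin n)} {s ρ : ℝ} (hs : 0 < s) (hρ : 0 < ρ)
    (hsub : ball z s ⊆ ball x ρ) :
    ⨍⁻ w in ball z s, ‖f w‖₊ ∂volume ≤ ENNReal.ofReal ((ρ / s) ^ n * ρ ^ (-lam) /
      volume.real (ball (0 : EuclideanSpace ℝ (Fin n)) 1)) * morreyNorm n lam f := by
  have hρs : ρ ^ ((n:ℝ) - lam) = (ρ / s) ^ n * ρ ^ (-lam) * s ^ n := by
    rw [sub_eq_add_neg, Real.rpow_add hρ, Real.rpow_natCast, div_pow]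
    field_simp
  rw [setLAverage_eq, ENNReal.div_eq_inv_mul]
  calc (volume (ball z s))⁻¹ * ∫⁻ w in ball z s, ‖f w‖₊
      ≤ (volume (ball z s))⁻¹ * (ENNReal.ofReal (ρ ^ ((n:ℝ) - lam)) * morreyNorm n lam f) := by
        gcongr
        exact (lintegral_mono_set hsub).trans (lintegral_ball_le_morreyNorm lam f x hρ)
    _ = _ := by
        rw [← mul_assoc, inv_measure_ball_mul_ofReal volume z hs, finrank_euclideanSpace_fin, hρs]
        congr 2
        field_simp

theorem maximalFn_le_of_radial {n : ℕ} {lam : ℝ} (hlam0 : 0 ≤ lam) (hlamn : lam ≤ n)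
    {f : EuclideanSpace ℝ (Fin n) → ℝ} {φ : ℝ → ℝ} (hφ0 : ∀ ρ ∈ Ioi (0:ℝ), 0 ≤ φ ρ)
    (hφ : AntitoneOn φ (Ioi 0)) (hf : ∀ x, f x = φ ‖x‖) {y : EuclideanSpace ℝ (Fin n)}
    (hy : y ≠ 0) :
    maximalFn n f y ≤ ENNReal.ofReal (6 ^ n / volume.real (ball (0 : EuclideanSpace ℝ (Fin n)) 1)
      * ‖y‖ ^ (-lam)) * morreyNorm n lam f := by
  have hv := measureReal_ball_pos volume (0 : EuclideanSpace ℝ (Fin n)) one_pos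
  have hy0 : 0 < ‖y‖ := norm_pos_iff.2 hy
  have : Nontrivial (EuclideanSpace ℝ (Fin n)) := ⟨⟨y, 0, hy⟩⟩
  refine iSup_le fun z => iSup_le fun s => iSup_le fun hs => iSup_le fun hyz => ?_
  rw [← ENNReal.div_eq_inv_mul, ← setLAverage_eq]
  rcases le_or_gt ‖y‖ (4 * s) with hlarge | hsmall
  · have hsub : ball z s ⊆ ball 0 (6 * s) :=
      (ball_subset_ball_zero_of_mem hyz).trans (ball_subset_ball (by linarith))
    refine (setLAverage_ball_le_morreyNorm lam f hs (by positivity) hsub).trans ?_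
    gcongr
    rw [mul_div_cancel_right₀ _ hs.ne', mul_div_right_comm]
    exact mul_le_mul_of_nonneg_left
      (Real.rpow_le_rpow_of_nonpos hy0 (by linarith) (neg_nonpos.2 hlam0)) (by positivity)
  · have hR : 0 < ‖y‖ / 2 := by positivity
    have hfar : ∀ w ∈ ball z s, ‖y‖ / 2 ≤ ‖w‖ := fun w hw => by
      linarith [norm_lt_norm_add_of_mem_ball hyz hw]
    calc ⨍⁻ w in ball z s, ‖f w‖₊ ∂volume
        ≤ ENNReal.ofReal (φ (‖y‖ / 2)) :=
          setLAverage_le_of_radial hφ0 hφ hf measurableSet_ball hR hfar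
      _ ≤ ⨍⁻ w in ball 0 (‖y‖ / 2), ‖f w‖₊ ∂volume :=
          ofReal_le_setLAverage_ball_of_radial hφ hf hR (measure_ball_pos _ _ hR).ne'
            measure_ball_lt_top.ne
      _ ≤ _ := setLAverage_ball_le_morreyNorm lam f hR hR subset_rfl
      _ ≤ _ := by
          gcongr
          rw [div_self hR.ne', one_pow, one_mul, div_mul_eq_mul_div,
            Real.div_rpow hy0.le two_pos.le, Real.rpow_neg two_pos.le, div_inv_eq_mul, mul_comm]
          gcongr
          calc (2:ℝ) ^ lam ≤ 2 ^ (n:ℝ) := Real.rpow_le_rpow_of_exponent_le one_le_two hlamn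
            _ ≤ 6 ^ n := by rw [Real.rpow_natCast]; gcongr; norm_num

theorem morreyNormE_le_of_le_weight {n : ℕ} {lam : ℝ} {g : EuclideanSpace ℝ (Fin n) → ℝ≥0∞}
    {K c : ℝ} (hK : 0 ≤ K) {A : ℝ≥0∞}
    (hweight : ∀ (x : EuclideanSpace ℝ (Fin n)) (r : ℝ), 0 < r →
      ∫⁻ y in ball x r, ENNReal.ofReal (‖y‖ ^ (-lam)) ≤ ENNReal.ofReal (c * r ^ ((n:ℝ) - lam)))
    (hg : ∀ᵐ y ∂volume, g y ≤ ENNReal.ofReal (K * ‖y‖ ^ (-lam)) * A) :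
    morreyNormE n lam g ≤ ENNReal.ofReal (K * c) * A := by
  refine iSup_le fun x => iSup_le fun r => iSup_le fun hr => ?_
  have hscale : ENNReal.ofReal (r ^ (lam - n)) * ENNReal.ofReal (c * r ^ ((n:ℝ) - lam))
      = ENNReal.ofReal c := by
    rw [← ENNReal.ofReal_mul (by positivity), mul_left_comm, ← Real.rpow_add hr,
      sub_add_sub_cancel', sub_self, Real.rpow_zero, mul_one]
  calc ENNReal.ofReal (r ^ (lam - n)) * ∫⁻ y in ball x r, g y
      ≤ ENNReal.ofReal (r ^ (lam - n)) *
          ∫⁻ y in ball x r, ENNReal.ofReal K * A * ENNReal.ofReal (‖y‖ ^ (-lam)) := by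
        gcongr 1
        refine lintegral_mono_ae (ae_restrict_of_ae (hg.mono fun y hy => hy.trans_eq ?_))
        rw [ENNReal.ofReal_mul hK]
        ring
    _ ≤ ENNReal.ofReal (r ^ (lam - n)) *
          (ENNReal.ofReal K * A * ENNReal.ofReal (c * r ^ ((n:ℝ) - lam))) := by
        rw [lintegral_const_mul _ (by fun_prop)]
        gcongr
        exact hweight x r hr
    _ = ENNReal.ofReal (K * c) * A := by
        rw [mul_left_comm, hscale, ENNReal.ofReal_mul hK]
        ring

/-- main theorem: For `n ≥ 1`, `0 < λ < n`, there is `C > 0` (depending only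
on `n, λ`) such that `‖Mf‖_{M_{1,λ}} ≤ C ‖f‖_{M_{1,λ}}` for all radial decreasing
`f(x) = φ(|x|)` with `φ ≥ 0` nonincreasing on `(0,∞)`. -/
theorem statement6 (n : ℕ) (hn : 1 ≤ n) (lam : ℝ) (hlam0 : 0 < lam) (hlamn : lam < n) :
    ∃ C : ℝ, 0 < C ∧ ∀ (f : EuclideanSpace ℝ (Fin n) → ℝ) (φ : ℝ → ℝ),
      (∀ ρ ∈ Set.Ioi (0:ℝ), 0 ≤ φ ρ) → AntitoneOn φ (Set.Ioi (0:ℝ)) →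
      (∀ x, f x = φ ‖x‖) →
      morreyNormE n lam (maximalFn n f) ≤ ENNReal.ofReal C * morreyNorm n lam f := by
  have : Nonempty (Fin n) := ⟨⟨0, hn⟩⟩
  set v := volume.real (ball (0 : EuclideanSpace ℝ (Fin n)) 1)
  have hv : 0 < v := measureReal_ball_pos _ _ one_pos
  have hlamn' : lam < Module.finrank ℝ (EuclideanSpace ℝ (Fin n)) := by
    rwa [finrank_euclideanSpace_fin]
  refine ⟨6 ^ n / v * ((n / (n - lam) * 3 ^ ((n:ℝ) - lam) + 1) * v), ?_, fun f φ hφ0 hφ hf => ?_⟩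
  · have : 0 < (n:ℝ) - lam := by linarith
    positivity
  refine morreyNormE_le_of_le_weight (by positivity) (fun x r hr => ?_) ?_
  · simpa only [finrank_euclideanSpace_fin, mul_assoc] using
      lintegral_ball_norm_rpow_le volume hlam0.le hlamn' x hr
  · filter_upwards [volume.ae_ne 0] with y hy using
      maximalFn_le_of_radial hlam0.le hlamn.le hφ0 hφ hf hy
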